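/- Let Y be standard Gaussian in R^p, p ≥ 1, and λ_1, ..., λ_p > 0. Then for each i, E[λ_i² Y_i⁴ / (Σ_k λ_k Y_k²)²] = (3 λ_i² / 4) ∫_0^∞ x dx / ( (1 + λ_i x)² ∏_{k=1}^p (1 + λ_k x)^{1/2} ). -/

import Mathlib

/-!
With `S = ∑ λ_k Y_k²`, the identity `1 / S² = (1/4) ∫₀^∞ x e^{-S x / 2} dx` and Tonelli turn the
expectation into `(λ_i² / 4) ∫₀^∞ x E[Y_i⁴ e^{-∑ λ_k x Y_k² / 2}] dx`. For fixed `x` the inner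
expectation factorizes over the independent coordinates, and the one-dimensional Gaussian integrals
`E[e^{-a Y² / 2}] = (1 + a)^{-1/2}` and `E[Y⁴ e^{-a Y² / 2}] = 3 (1 + a)^{-5/2}` give the integrand.
-/

open MeasureTheory ProbabilityTheory Real

/-- The law of a vector of `p` i.i.d. standard normal random variables. -/
noncomputable def stdGaussianPi (p : ℕ) : Measure (Fin p → ℝ) :=
  Measure.pi fun _ => gaussianReal 0 1

/-- The `i`-th eigenvalue of the spatial sign covariance matrix corresponding to
shape eigenvalues `lam`. -/
noncomputable def sscmEigen (p : ℕ) (lam : Fin p → ℝ) (i : Fin p) : ℝ :=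
  ∫ ω, lam i * (ω i) ^ 2 / (∑ j, lam j * (ω j) ^ 2) ∂(stdGaussianPi p)

open Set
open scoped ENNReal

-- Integrability comes for free: a non-integrable function has Bochner integral `0 ≠ c`.
theorem lintegral_ofReal_eq_ofReal_of_integral_eq {α : Type*} [MeasurableSpace α] {μ : Measure α}
    {f : α → ℝ} {c : ℝ} (hf : 0 ≤ᵐ[μ] f) (hc : c ≠ 0) (h : ∫ a, f a ∂μ = c) :
    ∫⁻ a, ENNReal.ofReal (f a) ∂μ = ENNReal.ofReal c := by
  rw [← h, ofReal_integral_eq_lintegral_ofReal (Integrable.of_integral_ne_zero (h ▸ hc)) hf]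

theorem lintegral_Ioi_mul_exp_neg_mul {r : ℝ} (hr : 0 < r) :
    ∫⁻ x in Ioi (0 : ℝ), ENNReal.ofReal (x * exp (-(r * x))) = ENNReal.ofReal (1 / r ^ 2) := by
  refine lintegral_ofReal_eq_ofReal_of_integral_eq
    ((ae_restrict_iff' measurableSet_Ioi).2 (ae_of_all _ fun x (hx : 0 < x) => by positivity))
    (by positivity) ?_
  have h := integral_rpow_mul_exp_neg_mul_rpow one_pos (by norm_num) hr (q := 1)
  norm_num [Real.rpow_neg hr.le] at h
  simpa using h

theorem ofReal_div_sq_eq_setLIntegral {c s : ℝ} (hc : 0 ≤ c) (hs : 0 < s) :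
    ENNReal.ofReal (c / s ^ 2) =
      ∫⁻ x in Ioi 0, ENNReal.ofReal (c / 4 * (x * exp (-(s * x) / 2))) := by
  rw [show c / s ^ 2 = c / 4 * (1 / (s / 2) ^ 2) by field_simp; ring,
    ENNReal.ofReal_mul (by positivity), ← lintegral_Ioi_mul_exp_neg_mul (half_pos hs),
    ← lintegral_const_mul' _ _ ENNReal.ofReal_ne_top]
  refine lintegral_congr fun x => ?_
  rw [← ENNReal.ofReal_mul (by positivity)]
  ring_nf

theorem ofReal_mul_div_sq_sum_eq_setLIntegral {ι : Type*} [Fintype ι] {lam : ι → ℝ}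
    (hlam : ∀ k, 0 ≤ lam k) (i : ι) (ω : ι → ℝ) :
    ENNReal.ofReal (lam i ^ 2 * ω i ^ 4 / (∑ k, lam k * ω k ^ 2) ^ 2) =
      ∫⁻ x in Ioi 0, ENNReal.ofReal (lam i ^ 2 * ω i ^ 4 / 4 *
        (x * exp (-((∑ k, lam k * ω k ^ 2) * x) / 2))) := by
  have hterm (k : ι) : 0 ≤ lam k * ω k ^ 2 := mul_nonneg (hlam k) (sq_nonneg _)
  rcases (Finset.sum_nonneg fun k _ => hterm k).eq_or_lt with hS | hS
  · have hi : lam i * ω i ^ 2 = 0 :=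
      le_antisymm (hS ▸ Finset.single_le_sum (fun k _ => hterm k) (Finset.mem_univ i)) (hterm i)
    have hnum : lam i ^ 2 * ω i ^ 4 = 0 := by
      rw [show lam i ^ 2 * ω i ^ 4 = (lam i * ω i ^ 2) ^ 2 by ring, hi, zero_pow two_ne_zero]
    simp [hnum]
  · exact ofReal_div_sq_eq_setLIntegral (by positivity) hS

theorem integral_abs_rpow_mul_exp_neg_mul_sq {q b : ℝ} (hq : -1 < q) (hb : 0 < b) :
    ∫ y : ℝ, |y| ^ q * exp (-b * y ^ 2) = b ^ (-(q + 1) / 2) * Gamma ((q + 1) / 2) := by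
  have h := integral_rpow_mul_exp_neg_mul_rpow two_pos hq hb
  simp only [rpow_two] at h
  have := integral_comp_abs (f := fun y => y ^ q * exp (-b * y ^ 2))
  simp only [sq_abs] at this
  rw [this, h]
  ring

theorem integral_gaussianReal_abs_rpow_mul_exp_neg_mul_sq {q a : ℝ} (hq : -1 < q) (ha : -1 < a) :
    ∫ y, |y| ^ q * exp (-(a * y ^ 2) / 2) ∂gaussianReal 0 1 =
      (√(2 * π))⁻¹ * (((1 + a) / 2) ^ (-(q + 1) / 2) * Gamma ((q + 1) / 2)) := by
  rw [integral_gaussianReal_eq_integral_smul one_ne_zero,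
    ← integral_abs_rpow_mul_exp_neg_mul_sq hq (by linarith : 0 < (1 + a) / 2), ← integral_const_mul]
  congr 1 with y
  simp only [gaussianPDFReal, smul_eq_mul, NNReal.coe_one, mul_one, sub_zero]
  rw [mul_left_comm, mul_assoc, ← exp_add]
  ring_nf

theorem lintegral_gaussianReal_exp_neg_mul_sq {a : ℝ} (ha : -1 < a) :
    ∫⁻ y, ENNReal.ofReal (exp (-(a * y ^ 2) / 2)) ∂gaussianReal 0 1 =
      ENNReal.ofReal (√(1 + a))⁻¹ := by
  have h1a : 0 < 1 + a := by linarith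
  refine lintegral_ofReal_eq_ofReal_of_integral_eq (ae_of_all _ fun y => (exp_pos _).le)
    (by positivity) ?_
  have h := integral_gaussianReal_abs_rpow_mul_exp_neg_mul_sq (q := 0) (by norm_num) ha
  simp only [rpow_zero, one_mul] at h
  rw [h, zero_add, neg_div, rpow_neg (by positivity), ← sqrt_eq_rpow, Gamma_one_half_eq,
    sqrt_div h1a.le, sqrt_mul zero_le_two]
  field_simp

theorem lintegral_gaussianReal_pow_four_mul_exp_neg_mul_sq {a : ℝ} (ha : -1 < a) :
    ∫⁻ y, ENNReal.ofReal (y ^ 4 * exp (-(a * y ^ 2) / 2)) ∂gaussianReal 0 1 =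
      ENNReal.ofReal (3 / ((1 + a) ^ 2 * √(1 + a))) := by
  have h1a : 0 < 1 + a := by linarith
  refine lintegral_ofReal_eq_ofReal_of_integral_eq (ae_of_all _ fun y => by positivity)
    (by positivity) ?_
  have h := integral_gaussianReal_abs_rpow_mul_exp_neg_mul_sq (q := 4) (by norm_num) ha
  have hΓ : Gamma (5 / 2) = 3 / 4 * √π := by
    rw [show (5 / 2 : ℝ) = 1 / 2 + 1 + 1 by norm_num, Gamma_add_one (by norm_num),
      Gamma_add_one (by norm_num), Gamma_one_half_eq]
    ring
  have hpow : ((1 + a) / 2) ^ (-(5 / 2 : ℝ)) = (((1 + a) / 2) ^ 2 * √((1 + a) / 2))⁻¹ := by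
    rw [rpow_neg (by positivity), show (5 / 2 : ℝ) = (2 : ℕ) + 1 / 2 by norm_num,
      rpow_add (by positivity), rpow_natCast, ← sqrt_eq_rpow]
  have h4 (y : ℝ) : |y| ^ (4 : ℝ) = y ^ 4 := by
    rw [show (4 : ℝ) = (4 : ℕ) by norm_num, rpow_natCast, pow_abs, abs_of_nonneg (by positivity)]
  simp only [h4] at h
  norm_num at h
  rw [h, hpow, hΓ, sqrt_div h1a.le]
  field_simp
  ring

instance isProbabilityMeasure_stdGaussianPi (p : ℕ) :
    IsProbabilityMeasure (stdGaussianPi p) := by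
  unfold stdGaussianPi
  infer_instance

theorem lintegral_pi_prod_eq_prod {ι : Type*} [Fintype ι] {Ω : ι → Type*}
    [∀ i, MeasurableSpace (Ω i)] {μ : (i : ι) → Measure (Ω i)} [∀ i, IsProbabilityMeasure (μ i)]
    {f : (i : ι) → Ω i → ℝ≥0∞} (hf : ∀ i, Measurable (f i)) :
    ∫⁻ ω, ∏ i, f i (ω i) ∂Measure.pi μ = ∏ i, ∫⁻ x, f i x ∂μ i := by
  rw [lintegral_prod_eq_prod_lintegral_of_indepFun _ _
    (iIndepFun_pi fun i => (hf i).aemeasurable) fun i => (hf i).comp (measurable_pi_apply i)]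
  exact Finset.prod_congr rfl fun i _ => (measurePreserving_eval μ i).lintegral_comp (hf i)

theorem lintegral_stdGaussianPi_pow_four_mul_exp {p : ℕ} {a : Fin p → ℝ} (ha : ∀ k, -1 < a k)
    (i : Fin p) :
    ∫⁻ ω, ENNReal.ofReal (ω i ^ 4 * exp (-(∑ k, a k * ω k ^ 2) / 2)) ∂stdGaussianPi p =
      ENNReal.ofReal (3 / ((1 + a i) ^ 2 * ∏ k, √(1 + a k))) := by
  have h1a (k : Fin p) : 0 < 1 + a k := by linarith [ha k]
  set f : Fin p → ℝ → ℝ≥0∞ := fun k y =>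
    ENNReal.ofReal ((if k = i then y ^ 4 else 1) * exp (-(a k * y ^ 2) / 2)) with hf
  have hsplit (ω : Fin p → ℝ) :
      ENNReal.ofReal (ω i ^ 4 * exp (-(∑ k, a k * ω k ^ 2) / 2)) = ∏ k, f k (ω k) := by
    rw [← ENNReal.ofReal_prod_of_nonneg fun k _ => by split_ifs <;> positivity,
      Finset.prod_mul_distrib, Finset.prod_ite_eq' Finset.univ i fun k => ω k ^ 4,
      if_pos (Finset.mem_univ _),
      ← exp_sum, ← Finset.sum_div, Finset.sum_neg_distrib]
  have hfactor (k : Fin p) : ∫⁻ y, f k y ∂gaussianReal 0 1 =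
      (if k = i then ENNReal.ofReal (3 / (1 + a i) ^ 2) else 1) *
        ENNReal.ofReal (√(1 + a k))⁻¹ := by
    split_ifs with hk
    · subst hk
      simp only [hf, if_true]
      rw [lintegral_gaussianReal_pow_four_mul_exp_neg_mul_sq (ha k),
        ← ENNReal.ofReal_mul (by positivity)]
      congr 1
      field_simp
    · simp only [hf, hk, if_false, one_mul]
      exact lintegral_gaussianReal_exp_neg_mul_sq (ha k)
  have hmeas (k : Fin p) : Measurable (f k) := by
    simp only [hf]
    split_ifs <;> fun_prop
  rw [lintegral_congr hsplit, stdGaussianPi, lintegral_pi_prod_eq_prod hmeas]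
  simp only [hfactor]
  rw [Finset.prod_mul_distrib, Finset.prod_ite_eq' Finset.univ i, if_pos (Finset.mem_univ _),
    ← ENNReal.ofReal_prod_of_nonneg fun k _ => by positivity, ← ENNReal.ofReal_mul (by positivity),
    Finset.prod_inv_distrib]
  congr 1
  field_simp

theorem lintegral_stdGaussianPi_mul_exp_neg_quadratic {p : ℕ} {lam : Fin p → ℝ}
    (hlam : ∀ k, 0 ≤ lam k) (i : Fin p) {x : ℝ} (hx : 0 ≤ x) :
    ∫⁻ ω, ENNReal.ofReal (lam i ^ 2 * ω i ^ 4 / 4 *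
        (x * exp (-((∑ k, lam k * ω k ^ 2) * x) / 2))) ∂stdGaussianPi p =
      ENNReal.ofReal (3 * lam i ^ 2 / 4 *
        (x / ((1 + lam i * x) ^ 2 * ∏ k, √(1 + lam k * x)))) := by
  have hregroup (ω : Fin p → ℝ) :
      lam i ^ 2 * ω i ^ 4 / 4 * (x * exp (-((∑ k, lam k * ω k ^ 2) * x) / 2)) =
        lam i ^ 2 * x / 4 * (ω i ^ 4 * exp (-(∑ k, lam k * x * ω k ^ 2) / 2)) := by
    rw [Finset.sum_mul, Finset.sum_congr rfl fun k _ => mul_right_comm (lam k) (ω k ^ 2) x]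
    ring
  have hlam_x (k : Fin p) : -1 < lam k * x := by linarith [mul_nonneg (hlam k) hx]
  simp_rw [hregroup]
  rw [lintegral_congr fun ω => ENNReal.ofReal_mul (by positivity),
    lintegral_const_mul' _ _ ENNReal.ofReal_ne_top,
    lintegral_stdGaussianPi_pow_four_mul_exp (a := fun k => lam k * x) hlam_x,
    ← ENNReal.ofReal_mul (by positivity)]
  congr 1
  ring

theorem eta_diag_integral_repr_general (p : ℕ) (lam : Fin p → ℝ)
    (hpos : ∀ i, 0 < lam i) (i : Fin p) :
    (∫ ω, (lam i) ^ 2 * (ω i) ^ 4 / (∑ k, lam k * (ω k) ^ 2) ^ 2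
        ∂(stdGaussianPi p)) =
      3 * (lam i) ^ 2 / 4 *
        ∫ x in Set.Ioi (0 : ℝ),
          x / ((1 + lam i * x) ^ 2 * ∏ k, Real.sqrt (1 + lam k * x)) := by
  have hlam (k : Fin p) : 0 ≤ lam k := (hpos k).le
  have hlintegral : ∫⁻ ω, ENNReal.ofReal (lam i ^ 2 * ω i ^ 4 / (∑ k, lam k * ω k ^ 2) ^ 2)
        ∂stdGaussianPi p =
      ∫⁻ x in Ioi 0, ENNReal.ofReal (3 * lam i ^ 2 / 4 *
          (x / ((1 + lam i * x) ^ 2 * ∏ k, √(1 + lam k * x)))) := by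
    rw [lintegral_congr (ofReal_mul_div_sq_sum_eq_setLIntegral hlam i),
      lintegral_lintegral_swap (by fun_prop),
      setLIntegral_congr_fun measurableSet_Ioi fun x hx =>
        lintegral_stdGaussianPi_mul_exp_neg_quadratic hlam i (le_of_lt hx)]
  rw [← integral_const_mul,
    integral_eq_lintegral_of_nonneg_ae (ae_of_all _ fun ω => by positivity)
      (by fun_prop : Measurable _).aestronglyMeasurable,
    integral_eq_lintegral_of_nonneg_ae ((ae_restrict_iff' measurableSet_Ioi).2
      (ae_of_all _ fun x (hx : 0 < x) => by positivity))
      (by fun_prop : Measurable _).aestronglyMeasurable, hlintegral]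

theorem eta_diag_integral_repr (p : ℕ) (hp : 1 ≤ p) (lam : Fin p → ℝ)
    (hpos : ∀ i, 0 < lam i) (i : Fin p) :
    (∫ ω, (lam i) ^ 2 * (ω i) ^ 4 / (∑ k, lam k * (ω k) ^ 2) ^ 2
        ∂(stdGaussianPi p)) =
      3 * (lam i) ^ 2 / 4 *
        ∫ x in Set.Ioi (0 : ℝ),
          x / ((1 + lam i * x) ^ 2 * ∏ k, Real.sqrt (1 + lam k * x)) :=
  eta_diag_integral_repr_general p lam hpos i
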